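/- Let Λ = ℚ[p_1, p_2, …] be the polynomial ring over ℚ in countably many variables p_k indexed by positive integers. Define h_m ∈ Λ by h_0 = 1 and the Newton recurrence m·h_m = Σ_{i=1}^m p_i·h_{m−i} for m ≥ 1, and for n ≥ 1 let D_n be the unique ℚ-linear derivation of Λ with D_n(p_k) = k^n for all k ≥ 1. Then for all n ≥ 1 and m ≥ 1, D_n(h_m) = Σ_{k=1}^m k^{n−1}·h_{m−k}. -/

import Mathlib

/-!
Apply `D` to Newton's recurrence `m h_m = Σ_i p_i h_{m-i}`. By the Leibniz rule and induction,
`m D(h_m) = Σ_i i c_i h_{m-i} + Σ_i p_i Σ_k c_k h_{m-i-k}`, where `D(p_k) = k c_k`. Swapping the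
double sum and using the recurrence once more for `h_{m-k}` turns the second term into
`Σ_k (m - k) c_k h_{m-k}`, so `m D(h_m) = m Σ_k c_k h_{m-k}`. For `D_n` take `c_k = k^{n-1}`.
-/

open MvPolynomial

/-- The derivation `D_n` of `Λ = ℚ[p_1, p_2, …]` with `D_n(p_k) = k^n` for all `k ≥ 1`. -/
noncomputable def Dn (n : ℕ) : Derivation ℚ (MvPolynomial ℕ+ ℚ) (MvPolynomial ℕ+ ℚ) :=
  mkDerivation ℚ fun k : ℕ+ => C (((k : ℕ) : ℚ) ^ n)

open Finset

theorem Finset.sum_range_succ_eq_sum_Icc {M : Type*} [AddCommMonoid M] (f : ℕ → M) (m : ℕ) :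
    ∑ i ∈ range m, f (i + 1) = ∑ i ∈ Icc 1 m, f i := by
  rw [range_eq_Ico, sum_Ico_add', zero_add, Ico_add_one_right_eq_Icc]

theorem Finset.sum_Icc_sum_Icc_sub_comm {M : Type*} [AddCommMonoid M] (f : ℕ → ℕ → M) (m : ℕ) :
    ∑ i ∈ Icc 1 m, ∑ k ∈ Icc 1 (m - i), f i k = ∑ k ∈ Icc 1 m, ∑ i ∈ Icc 1 (m - k), f i k :=
  sum_comm' fun i k => by simp only [mem_Icc]; omega

section Newton

variable {K A : Type*} [Field K] [CharZero K] [CommRing A] [Algebra K A]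

theorem Derivation.apply_eq_sum_of_newton (D : Derivation K A A) {p c h : ℕ → A}
    (hrec : ∀ m : ℕ, (m : K) • h m = ∑ i ∈ Icc 1 m, p i * h (m - i))
    (hD0 : D (h 0) = 0) (hDp : ∀ k, 1 ≤ k → D (p k) = (k : K) • c k) (m : ℕ) :
    D (h m) = ∑ k ∈ Icc 1 m, c k * h (m - k) := by
  induction m using Nat.strong_induction_on with
  | _ m ih =>
  rcases Nat.eq_zero_or_pos m with rfl | hm
  · simp [hD0]
  refine smul_right_injective A (Nat.cast_ne_zero.mpr hm.ne' : (m : K) ≠ 0) ?_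
  beta_reduce
  have hleibniz : (m : K) • D (h m) =
      ∑ i ∈ Icc 1 m, (p i * D (h (m - i)) + (i : K) • c i * h (m - i)) := by
    rw [← D.map_smul, hrec, map_sum]
    refine sum_congr rfl fun i hi => ?_
    rw [D.leibniz, hDp i (mem_Icc.mp hi).1, smul_eq_mul, smul_eq_mul, mul_comm (h (m - i))]
  have hswap : ∑ i ∈ Icc 1 m, p i * D (h (m - i)) =
      ∑ k ∈ Icc 1 m, ((m - k : ℕ) : K) • (c k * h (m - k)) :=
    calc ∑ i ∈ Icc 1 m, p i * D (h (m - i))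
        = ∑ i ∈ Icc 1 m, ∑ k ∈ Icc 1 (m - i), c k * (p i * h (m - k - i)) := by
          refine sum_congr rfl fun i hi => ?_
          rw [ih (m - i) (by simp only [mem_Icc] at hi; omega), mul_sum]
          refine sum_congr rfl fun k _ => ?_
          rw [Nat.sub_right_comm]
          ring
      _ = ∑ k ∈ Icc 1 m, c k * ∑ i ∈ Icc 1 (m - k), p i * h (m - k - i) := by
          rw [sum_Icc_sum_Icc_sub_comm]
          simp only [mul_sum]
      _ = _ := by simp only [← hrec, mul_smul_comm]
  rw [hleibniz, sum_add_distrib, hswap, ← sum_add_distrib, smul_sum]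
  refine sum_congr rfl fun k hk => ?_
  rw [smul_mul_assoc, ← add_smul, Nat.cast_sub (mem_Icc.mp hk).2, sub_add_cancel]

end Newton

theorem stmt3_general (H : ℕ → MvPolynomial ℕ+ ℚ) (H0 : H 0 = 1)
    (Hrec : ∀ m : ℕ, 1 ≤ m → (m : ℚ) • H m =
      ∑ i ∈ Finset.range m, X i.succPNat * H (m - (i + 1)))
    (n m : ℕ) (hn : 1 ≤ n) :
    Dn n (H m) = ∑ k ∈ Finset.Icc 1 m, C ((k : ℚ) ^ (n - 1)) * H (m - k) := by
  have hnewton : ∀ m : ℕ, (m : ℚ) • H m = ∑ i ∈ Icc 1 m, X i.toPNat' * H (m - i) := by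
    intro m
    rcases Nat.eq_zero_or_pos m with rfl | hm
    · simp
    rw [Hrec m hm, ← sum_range_succ_eq_sum_Icc]
    rfl
  refine (Dn n).apply_eq_sum_of_newton hnewton (by simp [H0]) (fun k hk => ?_) m
  rw [Dn, mkDerivation_X, PNat.toPNat'_coe hk, ← mul_pow_sub_one (by omega : n ≠ 0), C_mul,
    ← smul_eq_C_mul]

/-- If `h_0 = 1` and `m·h_m = Σ_{i=1}^m p_i·h_{m-i}` for `m ≥ 1` (Newton's recurrence, which
characterizes the complete homogeneous symmetric functions in the power-sum generators), then
`D_n(h_m) = Σ_{k=1}^m k^{n-1}·h_{m-k}` for all `n, m ≥ 1`. -/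
theorem stmt3 (H : ℕ → MvPolynomial ℕ+ ℚ) (H0 : H 0 = 1)
    (Hrec : ∀ m : ℕ, 1 ≤ m → (m : ℚ) • H m =
      ∑ i ∈ Finset.range m, X i.succPNat * H (m - (i + 1)))
    (n m : ℕ) (hn : 1 ≤ n) (hm : 1 ≤ m) :
    Dn n (H m) = ∑ k ∈ Finset.Icc 1 m, C ((k : ℚ) ^ (n - 1)) * H (m - k) :=
  stmt3_general H H0 Hrec n m hn
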